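/- arXiv:2507.15410 — 6 statements merged into one kernel-verified Lean document; each statement's English description precedes it below -/
import Mathlib

section
/- Let a, μ > 0, γ > 0, p > 1, t ≥ 0 and r ≥ 0 be real numbers, and let M ≥ r. Then (1 + ((a/μ) r^γ)^{1/(p-1)} · (γ/(p-1)) · t)^{(p-1)/γ} ≤ max{1, ((a/μ) M^γ)^{1/γ}} · e^t. -/
/-! Write `c = ((a/μ) r^γ)^{1/(p-1)}`, `x = γ t/(p-1)` and `β = (p-1)/γ`. Splitting `c ≤ 1`
and `c > 1` gives `1 + c x ≤ max{1, c} (1 + x)`; raising to the power `β` and using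
`1 + x ≤ eˣ` bounds the left side by `max{1, c^β} e^{xβ}`, where `c^β = ((a/μ) r^γ)^{1/γ}`
and `xβ = t`. Monotonicity in `r ≤ M` finishes the proof. -/

open Real

lemma one_add_mul_le_max_one_mul_one_add {c x : ℝ} (hx : 0 ≤ x) :
    1 + c * x ≤ max 1 c * (1 + x) := by
  rcases le_total c 1 with h | h
  · rw [max_eq_left h]
    nlinarith
  · rw [max_eq_right h]
    nlinarith

lemma one_add_rpow_le_exp_mul {x β : ℝ} (hx : 0 ≤ 1 + x) (hβ : 0 ≤ β) :
    (1 + x) ^ β ≤ exp (x * β) := by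
  rw [exp_mul]
  exact rpow_le_rpow hx (by linarith [add_one_le_exp x]) hβ

lemma one_add_mul_rpow_le_max_mul_exp {c x β : ℝ} (hc : 0 ≤ c) (hx : 0 ≤ x)
    (hβ : 0 ≤ β) :
    (1 + c * x) ^ β ≤ max 1 (c ^ β) * exp (x * β) := by
  have hx1 : 0 ≤ 1 + x := by linarith
  calc (1 + c * x) ^ β ≤ (max 1 c * (1 + x)) ^ β :=
        rpow_le_rpow (by positivity) (one_add_mul_le_max_one_mul_one_add hx) hβ
    _ = max 1 (c ^ β) * (1 + x) ^ β := by
        rw [mul_rpow (by positivity) hx1, rpow_max zero_le_one hc hβ, one_rpow]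
    _ ≤ max 1 (c ^ β) * exp (x * β) := by
        gcongr
        exact one_add_rpow_le_exp_mul hx1 hβ

/-- Elementary inequality:
    `(1 + ((a/μ) r^γ)^{1/(p-1)} (γ/(p-1)) t)^{(p-1)/γ} ≤ max{1, ((a/μ) M^γ)^{1/γ}} e^t`
    for `a, μ > 0`, `γ > 0`, `p > 1`, `t ≥ 0`, `0 ≤ r ≤ M`. -/
theorem density_lower_bound_key (a μ γ p t r M : ℝ) (ha : 0 < a) (hμ : 0 < μ)
    (hγ : 0 < γ) (hp : 1 < p) (ht : 0 ≤ t) (hr : 0 ≤ r) (hM : r ≤ M) :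
    (1 + ((a / μ) * r ^ γ) ^ (1 / (p - 1)) * (γ / (p - 1)) * t) ^ ((p - 1) / γ)
      ≤ max 1 (((a / μ) * M ^ γ) ^ (1 / γ)) * Real.exp t := by
  have hp1 : 0 < p - 1 := by linarith
  set X := (a / μ) * r ^ γ
  have hX : 0 ≤ X := by positivity
  have hpow : (X ^ (1 / (p - 1))) ^ ((p - 1) / γ) = X ^ (1 / γ) := by
    rw [← rpow_mul hX]
    field_simp
  have hexp : γ / (p - 1) * t * ((p - 1) / γ) = t := by
    field_simp
  have key := one_add_mul_rpow_le_max_mul_exp (rpow_nonneg hX (1 / (p - 1)))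
    (by positivity : 0 ≤ γ / (p - 1) * t) (by positivity : 0 ≤ (p - 1) / γ)
  rw [hpow, hexp, ← mul_assoc] at key
  calc _ ≤ max 1 (X ^ (1 / γ)) * exp t := key
    _ ≤ max 1 (((a / μ) * M ^ γ) ^ (1 / γ)) * exp t := by
        simp only [X]
        gcongr
end

section
/- Let p > 1, γ > 0, a, μ > 0, ϱ₀ > 0, t ≥ 0 be real numbers and let R > 0 satisfy R^{-γ/(p-1)} ≤ (a/μ)^{1/(p-1)} (e^{γt/(p-1)} − 1) + ϱ₀^{-γ/(p-1)} e^{γt/(p-1)}. Then R ≥ ϱ₀ e^{-2t} / max{1, ((a/μ) ϱ₀^γ)^{1/γ}}. -/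
/-!
Write `α = γ/(p-1)`, `s = α t` and `b = (a/μ) ϱ₀^γ`. Since `(a/μ)^{1/(p-1)} = ϱ₀^{-α} b^{1/(p-1)}`
and `e^s - 1 ≤ s e^s`, the right-hand side of the hypothesis is at most
`ϱ₀^{-α} (1 + b^{1/(p-1)} s) e^s ≤ ϱ₀^{-α} max(1, b^{1/γ})^α e^{2s}`, which is exactly
`(ϱ₀ e^{-2t} / max(1, b^{1/γ}))^{-α}`. As `x ↦ x^{-α}` is decreasing, the bound on `R` follows.
-/

open Real

lemma Real.exp_sub_one_le_mul_exp (x : ℝ) : exp x - 1 ≤ x * exp x :=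
  calc exp x - 1 = (1 - exp (-x)) * exp x := by rw [sub_mul, ← exp_add]; simp
    _ ≤ x * exp x := by gcongr; linarith [add_one_le_exp (-x)]

lemma Real.one_add_mul_le_max_one_mul_exp (y : ℝ) {x : ℝ} (hx : 0 ≤ x) :
    1 + y * x ≤ max 1 y * exp x :=
  calc 1 + y * x ≤ max 1 y * (1 + x) := by nlinarith [le_max_left 1 y, le_max_right 1 y]
    _ ≤ max 1 y * exp x := by gcongr; linarith [add_one_le_exp x]

lemma Real.max_one_rpow {y r : ℝ} (hy : 0 ≤ y) (hr : 0 ≤ r) : max 1 y ^ r = max 1 (y ^ r) := by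
  rw [rpow_max zero_le_one hy hr, one_rpow]

lemma Real.mul_rpow_rpow_one_div {c x : ℝ} (hc : 0 ≤ c) (hx : 0 ≤ x) (γ q : ℝ) :
    (c * x ^ γ) ^ (1 / q) = c ^ (1 / q) * x ^ (γ / q) := by
  rw [mul_rpow hc (rpow_nonneg hx γ), ← rpow_mul hx, mul_one_div]

lemma rpow_mul_exp_sub_one_add_rpow_neg_mul_exp_le {c ϱ₀ q γ t : ℝ} (hc : 0 ≤ c) (hϱ₀ : 0 < ϱ₀)
    (hq : 0 < q) (hγ : 0 < γ) (ht : 0 ≤ t) :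
    c ^ (1 / q) * (exp (γ * t / q) - 1) + ϱ₀ ^ (-(γ / q)) * exp (γ * t / q) ≤
      (ϱ₀ * exp (-(2 * t)) / max 1 ((c * ϱ₀ ^ γ) ^ (1 / γ))) ^ (-(γ / q)) := by
  set α := γ / q
  set b := c * ϱ₀ ^ γ
  set M := max 1 (b ^ (1 / γ))
  have hb : 0 ≤ b := by positivity
  have hM : 0 < M := zero_lt_one.trans_le (le_max_left _ _)
  have hs : γ * t / q = α * t := by ring
  rw [hs]
  have hMα : M ^ α = max 1 (b ^ (1 / q)) := by
    rw [max_one_rpow (by positivity) (by positivity), ← rpow_mul hb]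
    congr 2
    simp only [α]; field_simp
  have hcb : c ^ (1 / q) = ϱ₀ ^ (-α) * b ^ (1 / q) := by
    rw [mul_rpow_rpow_one_div hc hϱ₀.le, ← mul_assoc, mul_comm (ϱ₀ ^ (-α)), mul_assoc,
      ← rpow_add hϱ₀, neg_add_cancel, rpow_zero, mul_one]
  calc c ^ (1 / q) * (exp (α * t) - 1) + ϱ₀ ^ (-α) * exp (α * t)
      ≤ c ^ (1 / q) * (α * t * exp (α * t)) + ϱ₀ ^ (-α) * exp (α * t) := by
        gcongr; exact exp_sub_one_le_mul_exp _
    _ = ϱ₀ ^ (-α) * (1 + b ^ (1 / q) * (α * t)) * exp (α * t) := by rw [hcb]; ring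
    _ ≤ ϱ₀ ^ (-α) * (M ^ α * exp (α * t)) * exp (α * t) := by
        rw [hMα]; gcongr; exact one_add_mul_le_max_one_mul_exp _ (by positivity)
    _ = (ϱ₀ * exp (-(2 * t)) / M) ^ (-α) := by
        rw [div_rpow (by positivity) hM.le, mul_rpow hϱ₀.le (exp_pos _).le, ← exp_mul,
          rpow_neg hM.le, div_inv_eq_mul, mul_assoc, mul_assoc, ← exp_add]
        ring_nf

/-- Lower bound for the density along characteristics: if
    `R^{-γ/(p-1)} ≤ (a/μ)^{1/(p-1)}(e^{γt/(p-1)} − 1) + ϱ₀^{-γ/(p-1)} e^{γt/(p-1)}`,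
    then `R ≥ ϱ₀ e^{-2t} / max{1, ((a/μ)ϱ₀^γ)^{1/γ}}`. -/
theorem density_lower_bound (p γ a μ ϱ₀ t R : ℝ) (hp : 1 < p) (hγ : 0 < γ)
    (ha : 0 < a) (hμ : 0 < μ) (hϱ₀ : 0 < ϱ₀) (ht : 0 ≤ t) (hR : 0 < R)
    (h : R ^ (-(γ / (p - 1))) ≤
      (a / μ) ^ (1 / (p - 1)) * (Real.exp (γ * t / (p - 1)) - 1)
        + ϱ₀ ^ (-(γ / (p - 1))) * Real.exp (γ * t / (p - 1))) :
    ϱ₀ * Real.exp (-(2 * t)) / max 1 (((a / μ) * ϱ₀ ^ γ) ^ (1 / γ)) ≤ R := by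
  have hq : 0 < p - 1 := by linarith
  rw [← rpow_le_rpow_iff_of_neg hR (by positivity) (neg_neg_of_pos (div_pos hγ hq))]
  exact h.trans
    (rpow_mul_exp_sub_one_add_rpow_neg_mul_exp_le (div_pos ha hμ).le hϱ₀ hq hγ ht)
end

section
/- Let q > 1 be real, let k ≥ 1 be real, and let T : ℝ → ℝ be continuous and nondecreasing on [0, ∞) with T(z) = z for 0 ≤ z ≤ k and T(z) ≤ min{z, k+1} for z ≥ k. Define P(ϱ) = ϱ ∫₀^ϱ T(z)^q / z² dz for ϱ ≥ 0. Then for every ϱ ≥ 0, P(ϱ) ≥ (k/(k+1))^{q-1} · (1/(q−1)) · T(ϱ)^q. -/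
/-!
On `[0, min ϱ k]` the integrand is `z ^ (q - 2)`, and it is nonnegative beyond, so
`P(ϱ) ≥ ϱ · min(ϱ, k) ^ (q - 1) / (q - 1)`. On the other side `T(ϱ) ≤ m := min(ϱ, k + 1)`,
whence `T(ϱ) ^ q ≤ ϱ · m ^ (q - 1)`, and the elementary inequality
`k · m ≤ (k + 1) · min(ϱ, k)` absorbs the factor `(k / (k + 1)) ^ (q - 1)`.
-/

open intervalIntegral MeasureTheory Set

lemma div_mul_min_le_min {a b ρ : ℝ} (ha : 0 ≤ a) (hab : a ≤ b) (hρ : 0 ≤ ρ) :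
    a / b * min ρ b ≤ min ρ a := by
  rcases ha.eq_or_lt with rfl | ha
  · simp [hρ]
  rw [div_mul_eq_mul_div, div_le_iff₀ (ha.trans_le hab)]
  rcases le_total ρ a with h | h <;> rcases le_total ρ b with h' | h' <;>
    simp only [min_eq_left, min_eq_right, h, h'] <;> nlinarith

lemma rpow_le_mul_rpow_sub_one {q t ρ K : ℝ} (hq : 1 ≤ q) (ht : 0 ≤ t) (htρ : t ≤ ρ)
    (htK : t ≤ K) : t ^ q ≤ ρ * K ^ (q - 1) := by
  calc t ^ q = t ^ (q - 1) * t := by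
        rw [← Real.rpow_add_one' ht (by linarith), sub_add_cancel]
    _ ≤ K ^ (q - 1) * ρ :=
        mul_le_mul (by gcongr) htρ ht (Real.rpow_nonneg (ht.trans htK) _)
    _ = ρ * K ^ (q - 1) := mul_comm _ _

section RenormalizationIntegral

variable {q : ℝ} {T : ℝ → ℝ}

lemma eqOn_rpow_div_sq_of_eqOn_id {c : ℝ} (hc : 0 ≤ c)
    (hT : ∀ z, 0 ≤ z → z ≤ c → T z = z) :
    EqOn (fun z => T z ^ q / z ^ 2) (fun z => z ^ (q - 2)) (uIoc 0 c) := by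
  intro z hz
  rw [uIoc_of_le hc] at hz
  simp only [hT z hz.1.le hz.2, Real.rpow_sub hz.1, Real.rpow_two]

lemma intervalIntegrable_rpow_div_sq_of_eqOn_id {c : ℝ} (hq : 1 < q) (hc : 0 ≤ c)
    (hT : ∀ z, 0 ≤ z → z ≤ c → T z = z) :
    IntervalIntegrable (fun z => T z ^ q / z ^ 2) volume 0 c :=
  (intervalIntegrable_rpow' (by linarith)).congr (eqOn_rpow_div_sq_of_eqOn_id hc hT).symm

lemma integral_rpow_div_sq_of_eqOn_id {c : ℝ} (hq : 1 < q) (hc : 0 ≤ c)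
    (hT : ∀ z, 0 ≤ z → z ≤ c → T z = z) :
    ∫ z in (0 : ℝ)..c, T z ^ q / z ^ 2 = c ^ (q - 1) / (q - 1) := by
  rw [integral_congr_ae (ae_of_all _ (eqOn_rpow_div_sq_of_eqOn_id hc hT)),
    integral_rpow (Or.inl (by linarith)), Real.zero_rpow (by linarith)]
  ring_nf

lemma intervalIntegrable_rpow_div_sq_of_monotoneOn {a b : ℝ} (hq : 0 ≤ q) (ha : 0 < a)
    (hab : a ≤ b) (hT : MonotoneOn T (Icc a b)) (hTa : 0 ≤ T a) :
    IntervalIntegrable (fun z => T z ^ q / z ^ 2) volume a b := by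
  have hTq : MonotoneOn (fun z => T z ^ q) (uIcc a b) := by
    rw [uIcc_of_le hab]
    intro x hx y hy hxy
    exact Real.rpow_le_rpow (hTa.trans (hT ⟨le_rfl, hab⟩ hx hx.1)) (hT hx hy hxy) hq
  have hinv : ContinuousOn (fun z : ℝ => (z ^ 2)⁻¹) (uIcc a b) := by
    refine (continuousOn_pow 2).inv₀ fun z hz => ?_
    rw [uIcc_of_le hab] at hz
    exact pow_ne_zero 2 (ha.trans_le hz.1).ne'
  simpa only [div_eq_mul_inv] using hTq.intervalIntegrable.mul_continuousOn hinv

end RenormalizationIntegral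

section Truncation

variable {q k : ℝ} {T : ℝ → ℝ}

lemma truncation_nonneg (hk : 0 ≤ k) (hTid : ∀ z, 0 ≤ z → z ≤ k → T z = z)
    (hTmono : MonotoneOn T (Ici 0)) {z : ℝ} (hz : 0 ≤ z) : 0 ≤ T z :=
  hTid 0 le_rfl hk ▸ hTmono (mem_Ici.2 le_rfl) hz hz

lemma truncation_le_min (hTid : ∀ z, 0 ≤ z → z ≤ k → T z = z)
    (hTbound : ∀ z, k ≤ z → T z ≤ min z (k + 1)) {z : ℝ} (hz : 0 ≤ z) :
    T z ≤ min z (k + 1) := by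
  rcases le_total z k with hzk | hkz
  · rw [hTid z hz hzk]
    exact le_min le_rfl (by linarith)
  · exact hTbound z hkz

lemma intervalIntegrable_truncation_rpow_div_sq (hq : 1 < q) (hk : 0 < k)
    (hTid : ∀ z, 0 ≤ z → z ≤ k → T z = z) (hTmono : MonotoneOn T (Ici 0)) {b : ℝ}
    (hb : 0 ≤ b) : IntervalIntegrable (fun z => T z ^ q / z ^ 2) volume 0 b := by
  have h0k := intervalIntegrable_rpow_div_sq_of_eqOn_id hq hk.le hTid
  have hk_max := intervalIntegrable_rpow_div_sq_of_monotoneOn (q := q) (by linarith) hk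
    (le_max_right b k) (hTmono.mono fun z hz => hk.le.trans hz.1)
    (truncation_nonneg hk.le hTid hTmono hk.le)
  refine (h0k.trans hk_max).mono_set ?_
  rw [uIcc_of_le hb, uIcc_of_le (hk.le.trans (le_max_right b k))]
  exact Icc_subset_Icc le_rfl (le_max_left b k)

lemma rpow_div_le_integral_truncation (hq : 1 < q) (hk : 0 < k)
    (hTid : ∀ z, 0 ≤ z → z ≤ k → T z = z) (hTmono : MonotoneOn T (Ici 0)) {ϱ : ℝ}
    (hϱ : 0 ≤ ϱ) :
    min ϱ k ^ (q - 1) / (q - 1) ≤ ∫ z in (0 : ℝ)..ϱ, T z ^ q / z ^ 2 := by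
  have hmin : 0 ≤ min ϱ k := le_min hϱ hk.le
  rw [← integral_rpow_div_sq_of_eqOn_id hq hmin
    fun z hz hzm => hTid z hz (hzm.trans (min_le_right _ _))]
  refine integral_mono_interval le_rfl hmin (min_le_left _ _) ?_
    (intervalIntegrable_truncation_rpow_div_sq hq hk hTid hTmono hϱ)
  refine (ae_restrict_mem measurableSet_Ioc).mono fun z hz => ?_
  have := truncation_nonneg hk.le hTid hTmono hz.1.le
  dsimp only [Pi.zero_apply]
  positivity

end Truncation

theorem truncation_renormalization_bound_general (q k : ℝ) (hq : 1 < q) (hk : 1 ≤ k)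
    (T : ℝ → ℝ) (hTmono : MonotoneOn T (Set.Ici 0))
    (hTid : ∀ z, 0 ≤ z → z ≤ k → T z = z)
    (hTbound : ∀ z, k ≤ z → T z ≤ min z (k + 1)) :
    ∀ ϱ ≥ (0 : ℝ),
      (k / (k + 1)) ^ (q - 1) * (1 / (q - 1)) * (T ϱ) ^ q
        ≤ ϱ * ∫ z in (0 : ℝ)..ϱ, (T z) ^ q / z ^ 2 := by
  intro ϱ hϱ
  have hk0 : 0 < k := by linarith
  have hTϱ : T ϱ ^ q ≤ ϱ * min ϱ (k + 1) ^ (q - 1) :=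
    rpow_le_mul_rpow_sub_one hq.le (truncation_nonneg hk0.le hTid hTmono hϱ)
      ((truncation_le_min hTid hTbound hϱ).trans (min_le_left _ _))
      (truncation_le_min hTid hTbound hϱ)
  calc (k / (k + 1)) ^ (q - 1) * (1 / (q - 1)) * T ϱ ^ q
      ≤ (k / (k + 1)) ^ (q - 1) * (1 / (q - 1)) * (ϱ * min ϱ (k + 1) ^ (q - 1)) := by gcongr
    _ = ϱ * ((k / (k + 1) * min ϱ (k + 1)) ^ (q - 1) / (q - 1)) := by
        rw [Real.mul_rpow (by positivity) (le_min hϱ (by linarith))]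
        ring
    _ ≤ ϱ * (min ϱ k ^ (q - 1) / (q - 1)) := by
        gcongr
        exact div_mul_min_le_min hk0.le (by linarith) hϱ
    _ ≤ ϱ * ∫ z in (0 : ℝ)..ϱ, T z ^ q / z ^ 2 := by
        gcongr
        exact rpow_div_le_integral_truncation hq hk0 hTid hTmono hϱ

/-- For a truncation operator `T` at level `k` and `q > 1`, the renormalization
    `P(ϱ) = ϱ ∫₀^ϱ T(z)^q / z² dz` satisfies
    `P(ϱ) ≥ (k/(k+1))^{q-1} (1/(q−1)) T(ϱ)^q` for all `ϱ ≥ 0`. -/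
theorem truncation_renormalization_bound (q k : ℝ) (hq : 1 < q) (hk : 1 ≤ k)
    (T : ℝ → ℝ) (hTcont : ContinuousOn T (Set.Ici 0)) (hTmono : MonotoneOn T (Set.Ici 0))
    (hTid : ∀ z, 0 ≤ z → z ≤ k → T z = z)
    (hTbound : ∀ z, k ≤ z → T z ≤ min z (k + 1)) :
    ∀ ϱ ≥ (0 : ℝ),
      (k / (k + 1)) ^ (q - 1) * (1 / (q - 1)) * (T ϱ) ^ q
        ≤ ϱ * ∫ z in (0 : ℝ)..ϱ, (T z) ^ q / z ^ 2 :=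
  truncation_renormalization_bound_general q k hq hk T hTmono hTid hTbound
end

section
/- Let (α, μ) be a finite measure space, let (pₙ) be a sequence of real numbers with pₙ > 1 for all n and pₙ → ∞, let C ≥ 0, and let fₙ, f : α → ℝ be measurable functions such that ∫_α |fₙ|^{pₙ} dμ ≤ C for all n, and such that for every measurable set A ⊆ α one has ∫_A |f| dμ ≤ liminf_{n→∞} ∫_A |fₙ| dμ. Then |f| ≤ 1 μ-almost everywhere. -/
open MeasureTheory Filter Topology ENNReal

/-!
For `a > 1` and `p ≥ 1` one has `t ≤ a + a ^ (1 - p) * t ^ p` for all `t ≥ 0` (split at `t = a`).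
Integrating over `A` against the uniform bound on `∫ |fₙ| ^ pₙ` gives
`liminf ∫_A |fₙ| ≤ a μ(A)`, since `a ^ (1 - pₙ) → 0`; letting `a ↓ 1`, `∫_A |f| ≤ μ(A)` for every
measurable `A`, which forces `|f| ≤ 1` almost everywhere.
-/

theorem Real.le_add_rpow_one_sub_mul_rpow {a t p : ℝ} (ha : 0 < a) (ht : 0 ≤ t) (hp : 1 ≤ p) :
    t ≤ a + a ^ (1 - p) * t ^ p := by
  rcases le_or_gt t a with hta | hat
  · have : 0 ≤ a ^ (1 - p) * t ^ p := by positivity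
    linarith
  calc t = a ^ (1 - p) * (a ^ (p - 1) * t) := by
        rw [← mul_assoc, ← Real.rpow_add ha]; simp
    _ ≤ a ^ (1 - p) * (t ^ (p - 1) * t) := by gcongr
    _ = a ^ (1 - p) * t ^ p := by rw [← Real.rpow_add_one (ha.trans hat).ne', sub_add_cancel]
    _ ≤ a + a ^ (1 - p) * t ^ p := le_add_of_nonneg_left ha.le

theorem Real.tendsto_rpow_one_sub_of_one_lt {a : ℝ} (ha : 1 < a) {p : ℕ → ℝ}
    (hp : Tendsto p atTop atTop) : Tendsto (fun n ↦ a ^ (1 - p n)) atTop (𝓝 0) :=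
  (tendsto_rpow_atBot_of_base_gt_one a ha).comp <| by
    simpa [sub_eq_add_neg] using
      tendsto_atBot_add_const_left atTop 1 (tendsto_neg_atTop_atBot.comp hp)

section
variable {α : Type*} [MeasurableSpace α] {μ : Measure α}

theorem setLIntegral_ofReal_abs_le_add_lintegral_rpow (g : α → ℝ) (A : Set α) {a p : ℝ}
    (ha : 0 < a) (hp : 1 ≤ p) :
    ∫⁻ x in A, ENNReal.ofReal |g x| ∂μ ≤
      ENNReal.ofReal a * μ A +
        ENNReal.ofReal (a ^ (1 - p)) * ∫⁻ x, ENNReal.ofReal (|g x| ^ p) ∂μ := by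
  calc ∫⁻ x in A, ENNReal.ofReal |g x| ∂μ
      ≤ ∫⁻ x in A, ENNReal.ofReal a +
          ENNReal.ofReal (a ^ (1 - p)) * ENNReal.ofReal (|g x| ^ p) ∂μ := by
        refine lintegral_mono fun x ↦ ?_
        rw [← ENNReal.ofReal_mul (by positivity), ← ENNReal.ofReal_add ha.le (by positivity)]
        exact ENNReal.ofReal_le_ofReal (Real.le_add_rpow_one_sub_mul_rpow ha (abs_nonneg _) hp)
    _ = ENNReal.ofReal a * μ A +
          ENNReal.ofReal (a ^ (1 - p)) * ∫⁻ x in A, ENNReal.ofReal (|g x| ^ p) ∂μ := by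
        rw [lintegral_add_left measurable_const, setLIntegral_const,
          lintegral_const_mul' _ _ ofReal_ne_top]
    _ ≤ _ := by gcongr; exact Measure.restrict_le_self

theorem liminf_setLIntegral_le_mul_measure {g : ℕ → α → ℝ} {p : ℕ → ℝ} {M : ℝ≥0∞}
    (hp : Tendsto p atTop atTop) (hM : M ≠ ∞)
    (hbound : ∀ n, ∫⁻ x, ENNReal.ofReal (|g n x| ^ p n) ∂μ ≤ M) (A : Set α) {a : ℝ}
    (ha : 1 < a) :
    liminf (fun n ↦ ∫⁻ x in A, ENNReal.ofReal |g n x| ∂μ) atTop ≤ ENNReal.ofReal a * μ A := by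
  have hlim : Tendsto (fun n ↦ ENNReal.ofReal a * μ A + ENNReal.ofReal (a ^ (1 - p n)) * M) atTop
      (𝓝 (ENNReal.ofReal a * μ A)) := by
    have := ENNReal.Tendsto.mul_const
      (ENNReal.tendsto_ofReal (Real.tendsto_rpow_one_sub_of_one_lt ha hp)) (Or.inr hM)
    simpa using tendsto_const_nhds.add this
  refine (liminf_le_liminf ?_).trans_eq hlim.liminf_eq
  filter_upwards [hp.eventually_ge_atTop 1] with n hpn
  exact (setLIntegral_ofReal_abs_le_add_lintegral_rpow (g n) A (a := a) (by linarith) hpn).trans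
    (by gcongr; exact hbound n)

theorem liminf_setLIntegral_le_measure {g : ℕ → α → ℝ} {p : ℕ → ℝ} {M : ℝ≥0∞}
    (hp : Tendsto p atTop atTop) (hM : M ≠ ∞)
    (hbound : ∀ n, ∫⁻ x, ENNReal.ofReal (|g n x| ^ p n) ∂μ ≤ M) {A : Set α} (hA : μ A ≠ ∞) :
    liminf (fun n ↦ ∫⁻ x in A, ENNReal.ofReal |g n x| ∂μ) atTop ≤ μ A := by
  have hlim : Tendsto (fun a ↦ ENNReal.ofReal a * μ A) (𝓝[>] 1) (𝓝 (μ A)) := by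
    simpa using ENNReal.Tendsto.mul_const
      (ENNReal.continuous_ofReal.continuousWithinAt.tendsto (x := 1) (s := Set.Ioi 1)) (Or.inr hA)
  refine ge_of_tendsto hlim ?_
  filter_upwards [self_mem_nhdsWithin] with a ha
  exact liminf_setLIntegral_le_mul_measure hp hM hbound A ha

end

theorem limit_constraint_of_uniform_power_bound_general {α : Type*} [MeasurableSpace α]
    (μ : Measure α) [IsFiniteMeasure μ] (p : ℕ → ℝ)
    (hp : Tendsto p atTop atTop) (C : ℝ)
    (f : α → ℝ) (fn : ℕ → α → ℝ) (hf : Measurable f)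
    (hbound : ∀ n, ∫⁻ x, ENNReal.ofReal (|fn n x| ^ (p n)) ∂μ ≤ ENNReal.ofReal C)
    (hliminf : ∀ A : Set α, MeasurableSet A →
      ∫⁻ x in A, ENNReal.ofReal |f x| ∂μ
        ≤ liminf (fun n => ∫⁻ x in A, ENNReal.ofReal |fn n x| ∂μ) atTop) :
    ∀ᵐ x ∂μ, |f x| ≤ 1 := by
  have h : ∀ᵐ x ∂μ, ENNReal.ofReal |f x| ≤ 1 :=
    ae_le_of_forall_setLIntegral_le_of_sigmaFinite hf.abs.ennreal_ofReal fun A hA hμA ↦ by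
      rw [setLIntegral_one]
      exact (hliminf A hA).trans
        (liminf_setLIntegral_le_measure hp ofReal_ne_top hbound hμA.ne)
  filter_upwards [h] with x hx
  exact ENNReal.ofReal_le_one.mp hx

/-- If `∫ |fₙ|^{pₙ} dμ ≤ C` uniformly with `pₙ → ∞` on a finite measure space,
    and `∫_A |f| ≤ liminf ∫_A |fₙ|` for every measurable `A`, then `|f| ≤ 1` a.e. -/
theorem limit_constraint_of_uniform_power_bound {α : Type*} [MeasurableSpace α]
    (μ : Measure α) [IsFiniteMeasure μ] (p : ℕ → ℝ) (hp1 : ∀ n, 1 < p n)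
    (hp : Tendsto p atTop atTop) (C : ℝ) (hC : 0 ≤ C)
    (f : α → ℝ) (fn : ℕ → α → ℝ) (hf : Measurable f) (hfn : ∀ n, Measurable (fn n))
    (hbound : ∀ n, ∫⁻ x, ENNReal.ofReal (|fn n x| ^ (p n)) ∂μ ≤ ENNReal.ofReal C)
    (hliminf : ∀ A : Set α, MeasurableSet A →
      ∫⁻ x in A, ENNReal.ofReal |f x| ∂μ
        ≤ liminf (fun n => ∫⁻ x in A, ENNReal.ofReal |fn n x| ∂μ) atTop) :
    ∀ᵐ x ∂μ, |f x| ≤ 1 :=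
  limit_constraint_of_uniform_power_bound_general μ p hp C f fn hf hbound hliminf
end

section
/- Let u : ℝ → ℝ be twice continuously differentiable and periodic with period 1, with |u'(x)| < 1 for all x. Then −∫₀¹ u(x) u'(x) · d/dx( u'(x)/√(1 − u'(x)²) ) dx = ∫₀¹ u'(x)/√(1 − u'(x)²) dx. -/
/-!
With `F s = s / √(1 - s²)` and `G s = 1 / √(1 - s²)` one has `F' s = (1 - s²)^(-3/2)` and
`G' s = s · F' s`. Hence `(u · G(u'))' = u' · G(u') + u · u' · (F(u'))'`, and the left-hand
term is `F(u')`. Integrating over a period, the total derivative contributes nothing.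
-/

open Real

theorem Function.Periodic.deriv {𝕜 F : Type*} [NontriviallyNormedField 𝕜] [NormedAddCommGroup F]
    [NormedSpace 𝕜 F] {f : 𝕜 → F} {c : 𝕜} (hf : Function.Periodic f c) :
    Function.Periodic (deriv f) c := fun x => by
  rw [← deriv_comp_add_const, funext hf]

theorem Function.Periodic.intervalIntegral_eq_zero_of_hasDerivAt {E : Type*}
    [NormedAddCommGroup E] [NormedSpace ℝ E] [CompleteSpace E] {f f' : ℝ → E} {T : ℝ}
    (hf : Function.Periodic f T) (hderiv : ∀ x, HasDerivAt f (f' x) x)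
    (hint : IntervalIntegrable f' MeasureTheory.volume 0 T) :
    ∫ x in (0 : ℝ)..T, f' x = 0 := by
  rw [intervalIntegral.integral_eq_sub_of_hasDerivAt (fun x _ => hderiv x) hint,
    ← zero_add T, hf, sub_self]

theorem one_sub_sq_pos_of_abs_lt_one {s : ℝ} (hs : |s| < 1) : 0 < 1 - s ^ 2 :=
  sub_pos.mpr ((sq_lt_one_iff_abs_lt_one s).mpr hs)

theorem HasDerivAt.div_sqrt_one_sub_sq {v : ℝ → ℝ} {v' x : ℝ} (hv : HasDerivAt v v' x)
    (hx : |v x| < 1) :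
    HasDerivAt (fun y => v y / √(1 - v y ^ 2)) ((√(1 - v x ^ 2) ^ 3)⁻¹ * v') x := by
  have hpos := one_sub_sq_pos_of_abs_lt_one hx
  refine (hv.div (((hv.fun_pow 2).const_sub 1).sqrt hpos.ne')
    (sqrt_pos.mpr hpos).ne').congr_deriv ?_
  field_simp
  linear_combination 2 * v' * sq_sqrt hpos.le

theorem HasDerivAt.inv_sqrt_one_sub_sq {v : ℝ → ℝ} {v' x : ℝ} (hv : HasDerivAt v v' x)
    (hx : |v x| < 1) :
    HasDerivAt (fun y => (√(1 - v y ^ 2))⁻¹) (v x * ((√(1 - v x ^ 2) ^ 3)⁻¹ * v')) x := by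
  have hpos := one_sub_sq_pos_of_abs_lt_one hx
  refine (((hv.fun_pow 2).const_sub 1).sqrt hpos.ne').inv (sqrt_pos.mpr hpos).ne'
    |>.congr_deriv ?_
  field_simp
  ring

theorem HasDerivAt.mul_inv_sqrt_one_sub_sq {u v : ℝ → ℝ} {x v' : ℝ}
    (hu : HasDerivAt u (v x) x) (hv : HasDerivAt v v' x) (hx : |v x| < 1) :
    HasDerivAt (fun y => u y * (√(1 - v y ^ 2))⁻¹)
      (v x / √(1 - v x ^ 2) + u x * v x * ((√(1 - v x ^ 2) ^ 3)⁻¹ * v')) x :=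
  (hu.mul (hv.inv_sqrt_one_sub_sq hx)).congr_deriv (by ring)

/-- Periodic integration-by-parts identity for the singular (thick fluid) stress:
    if `u` is twice continuously differentiable, 1-periodic and `|u'| < 1`, then
    `−∫₀¹ u u' ∂ₓ( u'/√(1−u'²) ) = ∫₀¹ u'/√(1−u'²)`. -/
theorem singular_convective_identity (u : ℝ → ℝ) (hu : ContDiff ℝ 2 u)
    (hper : Function.Periodic u 1) (hlt : ∀ x, |deriv u x| < 1) :
    -∫ x in (0 : ℝ)..1,
        u x * deriv u x
          * deriv (fun y => deriv u y / Real.sqrt (1 - (deriv u y) ^ 2)) x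
      = ∫ x in (0 : ℝ)..1, deriv u x / Real.sqrt (1 - (deriv u x) ^ 2) := by
  set v := deriv u
  have hv : ContDiff ℝ 1 v := hu.deriv'
  have hu' (x : ℝ) : HasDerivAt u (v x) x := (hu.differentiable two_ne_zero x).hasDerivAt
  have hv' (x : ℝ) : HasDerivAt v (deriv v x) x := (hv.differentiable one_ne_zero x).hasDerivAt
  have hsqrt (x : ℝ) : √(1 - v x ^ 2) ≠ 0 :=
    (sqrt_pos.mpr (one_sub_sq_pos_of_abs_lt_one (hlt x))).ne'
  rw [funext fun x => ((hv' x).div_sqrt_one_sub_sq (hlt x)).deriv]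
  have hcont_v := hv.continuous
  have hcont_v' := hv.continuous_deriv le_rfl
  have hcont_u := hu.continuous
  have hcont_flux : Continuous fun x => v x / √(1 - v x ^ 2) := by
    fun_prop (disch := exact hsqrt)
  have hcont_convective :
      Continuous fun x => u x * v x * ((√(1 - v x ^ 2) ^ 3)⁻¹ * deriv v x) := by
    fun_prop (disch := exact fun x => pow_ne_zero 3 (hsqrt x))
  have hperiodic : Function.Periodic (fun y => u y * (√(1 - v y ^ 2))⁻¹) 1 := fun x => by
    simp only [hper x, v, hper.deriv x]
  have hzero := hperiodic.intervalIntegral_eq_zero_of_hasDerivAt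
    (fun x => (hu' x).mul_inv_sqrt_one_sub_sq (hv' x) (hlt x))
    ((hcont_flux.add hcont_convective).intervalIntegrable 0 1)
  rw [intervalIntegral.integral_add (hcont_flux.intervalIntegrable 0 1)
    (hcont_convective.intervalIntegrable 0 1)] at hzero
  linarith
end

section
/- Let (α, μ) be a finite measure space and let f : α → ℝ be measurable with |f| ≤ 1 μ-almost everywhere. Then ∫_α | |f(x)|^{p-2} f(x) − f(x)·𝟙_{\{|f(x)| = 1\}}(x) | dμ(x) → 0 as the real parameter p → ∞. -/
/-!
Pointwise, `|t| ^ (p - 2) * t` tends to `t` where `|t| = 1` and to `0` where `|t| < 1`, and for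
`p ≥ 2` it is bounded by `1` whenever `|t| ≤ 1`. On a finite measure space constants are integrable,
so dominated convergence applies to `| |f| ^ (p - 2) f - f 𝟙_{|f| = 1} |`.
-/

open MeasureTheory Filter Topology

theorem tendsto_integral_norm_sub_of_bounded {α E ι : Type*} [MeasurableSpace α]
    {μ : Measure α} [IsFiniteMeasure μ] [NormedAddCommGroup E] {l : Filter ι}
    [l.IsCountablyGenerated] {F : ι → α → E} {g : α → E} {C : ℝ}
    (hF_meas : ∀ᶠ i in l, AEStronglyMeasurable (F i) μ) (hg_meas : AEStronglyMeasurable g μ)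
    (hF_bound : ∀ᶠ i in l, ∀ᵐ x ∂μ, ‖F i x‖ ≤ C) (hg_bound : ∀ᵐ x ∂μ, ‖g x‖ ≤ C)
    (hlim : ∀ᵐ x ∂μ, Tendsto (fun i => F i x) l (𝓝 (g x))) :
    Tendsto (fun i => ∫ x, ‖F i x - g x‖ ∂μ) l (𝓝 0) := by
  have key := tendsto_integral_filter_of_dominated_convergence (μ := μ)
    (F := fun i x => ‖F i x - g x‖) (f := fun _ => (0 : ℝ)) (fun _ => C + C)
    (hF_meas.mono fun i hi => (hi.sub hg_meas).norm)
    (hF_bound.mono fun i hi => by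
      filter_upwards [hi, hg_bound] with x hFx hgx
      rw [norm_norm]
      exact (norm_sub_le _ _).trans (add_le_add hFx hgx))
    (integrable_const _)
    (hlim.mono fun x hx => by simpa using (hx.sub_const (g x)).norm)
  simpa using key

theorem tendsto_rpow_sub_atTop_of_le_one {b : ℝ} (hb₀ : 0 ≤ b) (hb₁ : b ≤ 1) (c : ℝ) :
    Tendsto (fun p : ℝ => b ^ (p - c)) atTop (𝓝 (if b = 1 then 1 else 0)) := by
  split_ifs with hb
  · simp [hb]
  · exact (tendsto_rpow_atTop_of_base_lt_one b (by linarith) (lt_of_le_of_ne hb₁ hb)).comp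
      (tendsto_atTop_add_const_right atTop (-c) tendsto_id)

theorem tendsto_abs_rpow_mul_self_atTop {t : ℝ} (ht : |t| ≤ 1) (c : ℝ) :
    Tendsto (fun p : ℝ => |t| ^ (p - c) * t) atTop (𝓝 (if |t| = 1 then t else 0)) := by
  have h := (tendsto_rpow_sub_atTop_of_le_one (abs_nonneg t) ht c).mul_const t
  split_ifs at h ⊢ <;> simpa using h

theorem abs_abs_rpow_mul_self_le_one {t p : ℝ} (ht : |t| ≤ 1) (hp : 0 ≤ p) :
    |(|t| ^ p * t)| ≤ 1 := by
  rw [abs_mul, abs_of_nonneg (Real.rpow_nonneg (abs_nonneg t) p)]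
  exact mul_le_one₀ (Real.rpow_le_one (abs_nonneg t) ht hp) (abs_nonneg t) ht

/-- Strong `L¹` convergence of the power-law nonlinearity: if `|f| ≤ 1` a.e. on a
    finite measure space, then `∫ | |f|^{p-2} f − f·𝟙_{|f|=1} | dμ → 0` as `p → ∞`. -/
theorem power_nonlinearity_L1_convergence {α : Type*} [MeasurableSpace α]
    (μ : Measure α) [IsFiniteMeasure μ] (f : α → ℝ) (hf : Measurable f)
    (hf1 : ∀ᵐ x ∂μ, |f x| ≤ 1) :
    Tendsto
      (fun p : ℝ => ∫ x, |(|f x| ^ (p - 2) * f x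
        - Set.indicator {x : α | |f x| = 1} f x)| ∂μ)
      atTop (nhds 0) := by
  have hset : MeasurableSet {x : α | |f x| = 1} := hf.abs (measurableSet_singleton 1)
  have hind : ∀ x, Set.indicator {x : α | |f x| = 1} f x = if |f x| = 1 then f x else 0 :=
    fun x => Set.indicator_apply _ _ _
  refine tendsto_integral_norm_sub_of_bounded (C := 1)
    (Eventually.of_forall fun p => ((hf.abs.pow_const _).mul hf).aestronglyMeasurable)
    (hf.indicator hset).aestronglyMeasurable ?_ ?_ ?_
  · filter_upwards [eventually_ge_atTop (2 : ℝ)] with p hp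
    filter_upwards [hf1] with x hx
    exact abs_abs_rpow_mul_self_le_one hx (by linarith)
  · filter_upwards [hf1] with x hx
    rw [Real.norm_eq_abs, hind]
    split_ifs <;> simp [hx]
  · filter_upwards [hf1] with x hx
    rw [hind]
    exact tendsto_abs_rpow_mul_self_atTop hx 2
end
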